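/- Let β₁, β₂ > 0 and Γ₁ = (1/(2β₁β₂))((β₁² + β₂² + 4) − √((β₁² + β₂² + 4)² − 4β₁²β₂²)). For every γ with Γ₁ < γ < min(β₁/β₂, 1), there exist real numbers A₁ < A₂ such that the function f_γ(x) = (1/π)(β₁/((x+1)² + β₁²) − γβ₂/((x−1)² + β₂²)) satisfies f_γ(x) < 0 if and only if x ∈ (A₁, A₂); in particular the negative part of the signed equilibrium measure is supported on the compact interval [A₁, A₂], and the support of its positive part is (−∞, A₁] ∪ [A₂, +∞). -/

import Mathlib

/-!
Clearing the (positive) denominators, `f_γ` has the sign of the quadratic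
`q(x) = (β₁ - γβ₂) x² - 2(β₁ + γβ₂) x + β₁(1 + β₂²) - γβ₂(1 + β₁²)`,
whose leading coefficient is positive because `γ < β₁/β₂`. The discriminant of `q` is
`-4β₁β₂ (β₁β₂γ² - Sγ + β₁β₂)` with `S = β₁² + β₂² + 4`; the quadratic in `γ` has roots
`Γ₁` and `Γ₂ ≥ S/(2β₁β₂) > 1`, so it is negative for `Γ₁ < γ < 1`. Hence `q` has two real roots
`A₁ < A₂` and is negative exactly between them.
-/

open Real Set

section QuadraticSign

variable {K : Type*} [Field K] {a b c s : K}

lemma quadratic_eq_mul_sub_mul_sub [NeZero (2 : K)] (ha : a ≠ 0) (h : discrim a b c = s * s)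
    (x : K) :
    a * (x * x) + b * x + c = a * ((x - (-b - s) / (2 * a)) * (x - (-b + s) / (2 * a))) := by
  rw [discrim] at h
  field_simp
  linear_combination (-1 : K) * h

variable [LinearOrder K] [IsStrictOrderedRing K]

lemma quadratic_roots_le (ha : 0 < a) (hs : 0 ≤ s) : (-b - s) / (2 * a) ≤ (-b + s) / (2 * a) :=
  div_le_div_of_nonneg_right (by linarith) (by positivity)

lemma quadratic_neg_iff (ha : 0 < a) (hs : 0 ≤ s) (h : discrim a b c = s * s) (x : K) :
    a * (x * x) + b * x + c < 0 ↔ x ∈ Ioo ((-b - s) / (2 * a)) ((-b + s) / (2 * a)) := by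
  rw [quadratic_eq_mul_sub_mul_sub ha.ne' h, mul_neg_iff, mem_Ioo,
    ← sub_mul_sub_neg_iff x (quadratic_roots_le ha hs)]
  simp only [ha, ha.not_gt, true_and, false_and, or_false]

lemma quadratic_pos_iff (ha : 0 < a) (hs : 0 ≤ s) (h : discrim a b c = s * s) (x : K) :
    0 < a * (x * x) + b * x + c ↔ x ∈ Iio ((-b - s) / (2 * a)) ∪ Ioi ((-b + s) / (2 * a)) := by
  rw [quadratic_eq_mul_sub_mul_sub ha.ne' h, mul_pos_iff_of_pos_left ha,
    sub_mul_sub_pos_iff x (quadratic_roots_le ha hs)]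
  rfl

end QuadraticSign

lemma exists_quadratic_neg_iff_mem_Ioo {a b c : ℝ} (ha : 0 < a) (hd : 0 < discrim a b c) :
    ∃ r₁ r₂, r₁ < r₂ ∧ ∀ x, (a * (x * x) + b * x + c < 0 ↔ x ∈ Ioo r₁ r₂) ∧
      (0 < a * (x * x) + b * x + c ↔ x ∈ Iio r₁ ∪ Ioi r₂) := by
  have hs : discrim a b c = √(discrim a b c) * √(discrim a b c) := (mul_self_sqrt hd.le).symm
  refine ⟨_, _, div_lt_div_of_pos_right (by linarith [sqrt_pos.mpr hd]) (by positivity),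
    fun x => ⟨quadratic_neg_iff ha (sqrt_nonneg _) hs x, quadratic_pos_iff ha (sqrt_nonneg _) hs x⟩⟩

section PhaseTwo

variable {β₁ β₂ : ℝ}

lemma density_eq_quadratic_div (hβ₁ : β₁ ≠ 0) (hβ₂ : β₂ ≠ 0) (γ x : ℝ) :
    (1 / π) * (β₁ / ((x + 1) ^ 2 + β₁ ^ 2) - γ * β₂ / ((x - 1) ^ 2 + β₂ ^ 2)) =
      ((β₁ - γ * β₂) * (x * x) + -2 * (β₁ + γ * β₂) * x
          + (β₁ * (1 + β₂ ^ 2) - γ * β₂ * (1 + β₁ ^ 2))) /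
        (π * (((x + 1) ^ 2 + β₁ ^ 2) * ((x - 1) ^ 2 + β₂ ^ 2))) := by
  have h₁ : (x + 1) ^ 2 + β₁ ^ 2 ≠ 0 := by positivity
  have h₂ : (x - 1) ^ 2 + β₂ ^ 2 ≠ 0 := by positivity
  field_simp
  ring

lemma quadratic_in_gamma_neg (hβ₁ : 0 < β₁) (hβ₂ : 0 < β₂) {γ : ℝ}
    (hγ : 1 / (2 * β₁ * β₂) * ((β₁ ^ 2 + β₂ ^ 2 + 4)
      - √((β₁ ^ 2 + β₂ ^ 2 + 4) ^ 2 - 4 * β₁ ^ 2 * β₂ ^ 2)) < γ) (hγ₁ : γ < 1) :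
    β₁ * β₂ * (γ * γ) + -(β₁ ^ 2 + β₂ ^ 2 + 4) * γ + β₁ * β₂ < 0 := by
  set S := β₁ ^ 2 + β₂ ^ 2 + 4
  have hp : 0 < β₁ * β₂ := mul_pos hβ₁ hβ₂
  have hS : 2 * (β₁ * β₂) < S := by nlinarith [sq_nonneg (β₁ - β₂)]
  have hdisc : discrim (β₁ * β₂) (-S) (β₁ * β₂) = √(S ^ 2 - 4 * β₁ ^ 2 * β₂ ^ 2) ^ 2 := by
    rw [sq_sqrt (by nlinarith), discrim]
    ring
  rw [quadratic_neg_iff hp (sqrt_nonneg _) (by rw [hdisc, sq])]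
  constructor
  · refine lt_of_eq_of_lt ?_ hγ
    ring
  · calc γ < 1 := hγ₁
      _ < -(-S) / (2 * (β₁ * β₂)) := by rw [neg_neg, one_lt_div (by positivity)]; exact hS
      _ ≤ _ := div_le_div_of_nonneg_right (by linarith [sqrt_nonneg (S ^ 2 - 4 * β₁ ^ 2 * β₂ ^ 2)])
          (by positivity)

lemma discrim_density_numerator_pos (hβ₁ : 0 < β₁) (hβ₂ : 0 < β₂) {γ : ℝ}
    (hγ : 1 / (2 * β₁ * β₂) * ((β₁ ^ 2 + β₂ ^ 2 + 4)
      - √((β₁ ^ 2 + β₂ ^ 2 + 4) ^ 2 - 4 * β₁ ^ 2 * β₂ ^ 2)) < γ) (hγ₁ : γ < 1) :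
    0 < discrim (β₁ - γ * β₂) (-2 * (β₁ + γ * β₂)) (β₁ * (1 + β₂ ^ 2) - γ * β₂ * (1 + β₁ ^ 2)) := by
  have h : discrim (β₁ - γ * β₂) (-2 * (β₁ + γ * β₂)) (β₁ * (1 + β₂ ^ 2) - γ * β₂ * (1 + β₁ ^ 2)) =
      -4 * (β₁ * β₂) * (β₁ * β₂ * (γ * γ) + -(β₁ ^ 2 + β₂ ^ 2 + 4) * γ + β₁ * β₂) := by
    rw [discrim]
    ring
  rw [h]
  exact mul_pos_of_neg_of_neg (by nlinarith [mul_pos hβ₁ hβ₂])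
    (quadratic_in_gamma_neg hβ₁ hβ₂ hγ hγ₁)

end PhaseTwo

/-- **Phase 2 for the signed equilibrium measure.** For
`Γ₁ < γ < min(β₁/β₂, 1)`, the density
`f_γ(x) = (1/π)(β₁/((x+1)² + β₁²) − γβ₂/((x−1)² + β₂²))` is negative exactly on a
bounded open interval `(A₁, A₂)`; consequently the negative part of the signed
equilibrium measure is supported on the compact interval `[A₁, A₂]`, and the support
of its positive part is `(−∞, A₁] ∪ [A₂, ∞)`. -/
theorem signed_measure_phase_two
    (β₁ β₂ : ℝ) (hβ₁ : 0 < β₁) (hβ₂ : 0 < β₂)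
    (Γ₁ : ℝ)
    (hΓ₁ : Γ₁ = (1 / (2 * β₁ * β₂)) * ((β₁ ^ 2 + β₂ ^ 2 + 4)
      - Real.sqrt ((β₁ ^ 2 + β₂ ^ 2 + 4) ^ 2 - 4 * β₁ ^ 2 * β₂ ^ 2)))
    (f : ℝ → ℝ → ℝ)
    (hf : ∀ γ x, f γ x = (1 / π) *
      (β₁ / ((x + 1) ^ 2 + β₁ ^ 2) - γ * β₂ / ((x - 1) ^ 2 + β₂ ^ 2)))
    (γ : ℝ) (hγ : Γ₁ < γ) (hγ' : γ < min (β₁ / β₂) 1) :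
    ∃ A₁ A₂ : ℝ, A₁ < A₂ ∧
      (∀ x : ℝ, f γ x < 0 ↔ x ∈ Ioo A₁ A₂) ∧
      closure {x : ℝ | f γ x < 0} = Icc A₁ A₂ ∧
      closure {x : ℝ | 0 < f γ x} = Iic A₁ ∪ Ici A₂ := by
  obtain ⟨hγβ, hγ₁⟩ := lt_min_iff.mp hγ'
  have ha : 0 < β₁ - γ * β₂ := sub_pos.mpr ((lt_div_iff₀ hβ₂).mp hγβ)
  obtain ⟨A₁, A₂, hlt, hq⟩ := exists_quadratic_neg_iff_mem_Ioo ha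
    (discrim_density_numerator_pos hβ₁ hβ₂ (hΓ₁ ▸ hγ) hγ₁)
  have hden : ∀ x, 0 < π * (((x + 1) ^ 2 + β₁ ^ 2) * ((x - 1) ^ 2 + β₂ ^ 2)) := fun x => by
    positivity
  have hneg : ∀ x, f γ x < 0 ↔ x ∈ Ioo A₁ A₂ := fun x => by
    rw [hf, density_eq_quadratic_div hβ₁.ne' hβ₂.ne', div_lt_iff₀ (hden x), zero_mul, (hq x).1]
  have hpos : ∀ x, 0 < f γ x ↔ x ∈ Iio A₁ ∪ Ioi A₂ := fun x => by
    rw [hf, density_eq_quadratic_div hβ₁.ne' hβ₂.ne',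
      div_pos_iff_of_pos_right (hden x), (hq x).2]
  refine ⟨A₁, A₂, hlt, hneg, ?_, ?_⟩
  · rw [show {x | f γ x < 0} = Ioo A₁ A₂ from Set.ext hneg, closure_Ioo hlt.ne]
  · rw [show {x | 0 < f γ x} = Iio A₁ ∪ Ioi A₂ from Set.ext hpos, closure_union, closure_Iio,
      closure_Ioi]
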